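/- arXiv:1503.07192 — 2 statements merged into one kernel-verified Lean document; each statement's English description precedes it below -/
import Mathlib

section
/- Let v1 be a vertex with P v1 ≠ j, v2 a vertex with P v2 = j, and let π be a walk in G from v1 to v2. If b2 is the last vertex along π that belongs to B(C_j), then every vertex of π following b2 (and b2 itself) satisfies P = j; that is, the suffix of π from b2 to v2 lies entirely in the component C_j. Consequently the length of that suffix is at least dist_{C_j}(b2,v2). -/
open scoped ENNReal

namespace SPQ

variable {V : Type*} {ι : Type*}

/-- The length of a walk: the sum of the weights `w` over its consecutive edges. -/
noncomputable def wlen (w : V → V → ℝ≥0∞) {G : SimpleGraph V} {u v : V} (p : G.Walk u v) : ℝ≥0∞ :=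
  (p.darts.map fun d => w d.toProd.1 d.toProd.2).sum

/-- The shortest-path distance: infimum of lengths of all walks (⊤ if none exists). -/
noncomputable def gdist (G : SimpleGraph V) (w : V → V → ℝ≥0∞) (u v : V) : ℝ≥0∞ :=
  ⨅ p : G.Walk u v, wlen w p

/-- The component `C_i`: the subgraph of `G` induced on `P ⁻¹ {i}`
(as a graph on `V`: edges of `G` with both endpoints mapped to `i` by `P`). -/
def comp (G : SimpleGraph V) (P : V → ι) (i : ι) : SimpleGraph V where
  Adj u v := G.Adj u v ∧ P u = i ∧ P v = i
  symm := ⟨fun _ _ h => ⟨h.1.symm, h.2.2, h.2.1⟩⟩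
  loopless := ⟨fun u h => G.irrefl h.1⟩

/-- The boundary `B(C_i)`: vertices of component `i` having a `G`-neighbor
in a different component. -/
def bdry (G : SimpleGraph V) (P : V → ι) (i : ι) : Set V :=
  {v | P v = i ∧ ∃ u, G.Adj v u ∧ P u ≠ i}

/-- The set `B` of all boundary vertices. -/
def bdryAll (G : SimpleGraph V) (P : V → ι) : Set V :=
  ⋃ i, bdry G P i

/-- The boundary graph `BG`: distinct boundary vertices `b1, b2` are adjacent
iff `P b1 = P b2` or `G.Adj b1 b2`. -/
def BGraph (G : SimpleGraph V) (P : V → ι) : SimpleGraph V where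
  Adj b1 b2 := b1 ≠ b2 ∧ b1 ∈ bdryAll G P ∧ b2 ∈ bdryAll G P ∧ (P b1 = P b2 ∨ G.Adj b1 b2)
  symm := by
    constructor
    intro u v h
    refine ⟨h.1.symm, h.2.2.1, h.2.1, ?_⟩
    rcases h.2.2.2 with h' | h'
    · exact Or.inl h'.symm
    · exact Or.inr h'.symm
  loopless := ⟨fun u h => h.1 rfl⟩

open Classical in
/-- The edge weight of the boundary graph:
`wt b1 b2 = dist_{C_{P b1}}(b1, b2)` if `P b1 = P b2`, and `w b1 b2` otherwise. -/
noncomputable def wt (G : SimpleGraph V) (P : V → ι) (w : V → V → ℝ≥0∞) (b1 b2 : V) : ℝ≥0∞ :=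
  if P b1 = P b2 then gdist (comp G P (P b1)) w b1 b2 else w b1 b2

open SimpleGraph

lemma wlen_transfer (w : V → V → ℝ≥0∞) {G H : SimpleGraph V} {u v : V}
    (p : G.Walk u v) (hp : ∀ e ∈ p.edges, e ∈ H.edgeSet) :
    wlen w (p.transfer H hp) = wlen w p := by
  induction p with
  | nil => rfl
  | cons _ p ih =>
    simp only [wlen, Walk.transfer, Walk.darts_cons, List.map_cons, List.sum_cons] at ih ⊢
    exact congrArg _ (ih _)

lemma gdist_le_wlen_of_edges_subset (w : V → V → ℝ≥0∞) {G H : SimpleGraph V} {u v : V}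
    (p : G.Walk u v) (hp : ∀ e ∈ p.edges, e ∈ H.edgeSet) :
    gdist H w u v ≤ wlen w p :=
  wlen_transfer w p hp ▸ iInf_le _ _

lemma gdist_comp_le_wlen (w : V → V → ℝ≥0∞) {G : SimpleGraph V} (P : V → ι) {j : ι}
    {u v : V} (p : G.Walk u v) (hp : ∀ x ∈ p.support, P x = j) :
    gdist (comp G P j) w u v ≤ wlen w p := by
  refine gdist_le_wlen_of_edges_subset w p fun e he => ?_
  induction e with
  | h a b =>
    exact ⟨p.edges_subset_edgeSet he, hp a (p.fst_mem_support_of_mem_edges he),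
      hp b (p.snd_mem_support_of_mem_edges he)⟩

lemma dart_snd_ne_of_count_support_eq_one [DecidableEq V] {G : SimpleGraph V} {u v : V}
    (p : G.Walk u v) (hp : p.support.count u = 1) : ∀ d ∈ p.darts, d.snd ≠ u := by
  intro d hd hdu
  have hu : u ∈ p.support.tail := p.map_snd_darts ▸ List.mem_map.mpr ⟨d, hd, hdu⟩
  have := List.count_pos_iff.mpr hu
  rw [← p.cons_tail_support, List.count_cons_self] at hp
  omega

/-- After a vertex outside `C_j`, the walk must cross into `C_j`, and the head of the crossing
dart is a boundary vertex. -/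
lemma support_subset_comp_of_darts_snd_notMem_bdry {G : SimpleGraph V} (P : V → ι) {j : ι}
    {u v : V} (p : G.Walk u v) (hv : P v = j) (hp : ∀ d ∈ p.darts, d.snd ∉ bdry G P j) :
    ∀ x ∈ p.support, P x = j := by
  classical
  intro x hx
  by_contra hxj
  obtain ⟨d, hd, hfst, hsnd⟩ :=
    (p.dropUntil x hx).exists_boundary_dart {y | P y ≠ j} hxj (by simpa using hv)
  exact hp d (p.darts_dropUntil_subset_darts hx hd) ⟨not_not.mp hsnd, d.fst, d.adj.symm, hfst⟩

theorem stmt7_general {V : Type*} {ι : Type*} [DecidableEq V]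
    (G : SimpleGraph V) (w : V → V → ℝ≥0∞)
    (P : V → ι) (j : ι) (v1 v2 b2 : V) (h2 : P v2 = j)
    (π : G.Walk v1 v2) (hb2 : b2 ∈ π.reverse.support)
    (hlast : ∀ x ∈ ((π.reverse.takeUntil b2 hb2).reverse).support,
      x ∈ bdry G P j → x = b2) :
    (∀ x ∈ ((π.reverse.takeUntil b2 hb2).reverse).support, P x = j) ∧
    gdist (comp G P j) w b2 v2 ≤ wlen w ((π.reverse.takeUntil b2 hb2).reverse) := by
  set τ := (π.reverse.takeUntil b2 hb2).reverse
  have hcount : τ.support.count b2 = 1 := by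
    rw [Walk.support_reverse, List.count_reverse, π.reverse.count_support_takeUntil_eq_one hb2]
  have hτ : ∀ x ∈ τ.support, P x = j :=
    support_subset_comp_of_darts_snd_notMem_bdry P τ h2 fun d hd hdB =>
      dart_snd_ne_of_count_support_eq_one τ hcount d hd
        (hlast _ (τ.dart_snd_mem_support_of_mem_darts hd) hdB)
  exact ⟨hτ, gdist_comp_le_wlen w P τ hτ⟩

/-- Let `v1` have `P v1 ≠ j`, `v2` have `P v2 = j`, and let `π` be a walk
in `G` from `v1` to `v2`. If `b2` is the last vertex along `π` that belongs to
`B(C_j)`, then every vertex of `π` following `b2` (and `b2` itself) satisfies `P = j`;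
that is, the suffix of `π` from `b2` to `v2` lies entirely in the component `C_j`.
Consequently the length of that suffix is at least `dist_{C_j}(b2, v2)`.
(The suffix of `π` from the last occurrence of `b2` to `v2` is formalized as
`(π.reverse.takeUntil b2 hb2).reverse`.) -/
theorem stmt7 {V : Type*} {ι : Type*} [Fintype V] [Fintype ι] [DecidableEq V]
    (G : SimpleGraph V) (w : V → V → ℝ≥0∞)
    (hsymm : ∀ u v, w u v = w v u) (hfin : ∀ u v, G.Adj u v → w u v < ⊤)
    (P : V → ι) (j : ι) (v1 v2 b2 : V) (h1 : P v1 ≠ j) (h2 : P v2 = j)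
    (π : G.Walk v1 v2) (hb2 : b2 ∈ π.reverse.support) (hb2B : b2 ∈ bdry G P j)
    (hlast : ∀ x ∈ ((π.reverse.takeUntil b2 hb2).reverse).support,
      x ∈ bdry G P j → x = b2) :
    (∀ x ∈ ((π.reverse.takeUntil b2 hb2).reverse).support, P x = j) ∧
    gdist (comp G P j) w b2 v2 ≤ wlen w ((π.reverse.takeUntil b2 hb2).reverse) :=
  stmt7_general G w P j v1 v2 b2 h2 π hb2 hlast

end SPQ
end

section
/- Let v1 be a vertex with P v1 = i and b2 a boundary vertex with P b2 ≠ i. Then dist_G(v1,b2) equals the infimum over b1 ∈ B(C_i) of dist_{C_i}(v1,b1) + dist_BG(b1,b2). -/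
/-!
Component distances and boundary-graph weights are `G`-distances, so the triangle inequality
bounds `dist_G(v1, b2)` by every term of the infimum. Conversely, follow a walk from `v1` to the
boundary vertex `b2` edge by edge, keeping the invariant that the rest of the walk is at least the
infimum taken from the current vertex: an edge inside the current component is absorbed into the
component distance, and the first edge leaving a component starts at a boundary vertex and is
itself an edge of the boundary graph.
-/

open scoped ENNReal

namespace SPQ

variable {V : Type*} {ι : Type*}

section WalkDistance

open SimpleGraph

variable {G H : SimpleGraph V} {w w' : V → V → ℝ≥0∞} {u v x : V}

@[simp]
lemma wlen_nil : wlen w (Walk.nil : G.Walk u u) = 0 := rfl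

lemma wlen_cons (h : G.Adj u v) (p : G.Walk v x) :
    wlen w (Walk.cons h p) = w u v + wlen w p := by
  simp [wlen]

lemma wlen_append (p : G.Walk u x) (q : G.Walk x v) :
    wlen w (p.append q) = wlen w p + wlen w q := by
  simp [wlen, Walk.darts_append]

lemma gdist_le_wlen (p : G.Walk u v) : gdist G w u v ≤ wlen w p := iInf_le _ p

@[simp]
lemma gdist_self (u : V) : gdist G w u u = 0 :=
  nonpos_iff_eq_zero.mp (gdist_le_wlen Walk.nil)

lemma gdist_le_of_adj (h : G.Adj u v) : gdist G w u v ≤ w u v := by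
  simpa [wlen_cons] using gdist_le_wlen (w := w) (Walk.cons h Walk.nil)

lemma gdist_triangle (u x v : V) :
    gdist G w u v ≤ gdist G w u x + gdist G w x v := by
  simp only [gdist, ENNReal.iInf_add, ENNReal.add_iInf]
  exact le_iInf₂ fun q p => (gdist_le_wlen (p.append q)).trans_eq (wlen_append p q)

lemma gdist_le_add_of_adj (h : G.Adj u x) (v : V) :
    gdist G w u v ≤ w u x + gdist G w x v :=
  (gdist_triangle u x v).trans (add_le_add_left (gdist_le_of_adj h) _)

lemma gdist_le_gdist_of_forall_adj (hadj : ∀ a b, H.Adj a b → gdist G w a b ≤ w' a b)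
    (u v : V) : gdist G w u v ≤ gdist H w' u v := by
  refine le_iInf fun p => ?_
  induction p with
  | nil => simp
  | cons h q ih =>
    rw [wlen_cons]
    exact (gdist_triangle _ _ _).trans (add_le_add (hadj _ _ h) ih)

lemma gdist_le_gdist_of_le (hle : H ≤ G) (u v : V) : gdist G w u v ≤ gdist H w u v :=
  gdist_le_gdist_of_forall_adj (fun _ _ h => gdist_le_of_adj (hle h)) u v

end WalkDistance

section BoundaryGraph

variable {G : SimpleGraph V} {P : V → ι} {w : V → V → ℝ≥0∞} {a b c x y : V} {j : ι}

lemma comp_le (G : SimpleGraph V) (P : V → ι) (j : ι) : comp G P j ≤ G :=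
  fun _ _ h => h.1

lemma mem_bdryAll_iff : b ∈ bdryAll G P ↔ b ∈ bdry G P (P b) := by
  refine ⟨fun hb => ?_, fun hb => Set.mem_iUnion.mpr ⟨_, hb⟩⟩
  obtain ⟨j, hj⟩ := Set.mem_iUnion.mp hb
  rwa [hj.1]

lemma mem_bdry_of_adj (h : G.Adj a c) (hac : P c ≠ P a) : a ∈ bdry G P (P a) :=
  ⟨rfl, c, h, hac⟩

lemma mem_bdryAll_of_adj (h : G.Adj a c) (hac : P c ≠ P a) : a ∈ bdryAll G P :=
  mem_bdryAll_iff.mpr (mem_bdry_of_adj h hac)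

lemma gdist_le_wt (h : (BGraph G P).Adj a b) : gdist G w a b ≤ wt G P w a b := by
  obtain ⟨-, -, -, hab⟩ := h
  unfold wt
  split_ifs with hP
  · exact gdist_le_gdist_of_le (comp_le G P _) a b
  · exact gdist_le_of_adj (hab.resolve_left hP)

lemma gdist_le_gdist_BGraph (a b : V) :
    gdist G w a b ≤ gdist (BGraph G P) (wt G P w) a b :=
  gdist_le_gdist_of_forall_adj (fun _ _ => gdist_le_wt) a b

lemma gdist_BGraph_le_gdist_comp (hx : x ∈ bdry G P j) (hy : y ∈ bdry G P j) :
    gdist (BGraph G P) (wt G P w) x y ≤ gdist (comp G P j) w x y := by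
  rcases eq_or_ne x y with rfl | hxy
  · simp
  · have hP : P x = P y := hx.1.trans hy.1.symm
    calc gdist (BGraph G P) (wt G P w) x y
        ≤ wt G P w x y := gdist_le_of_adj
          ⟨hxy, Set.mem_iUnion.mpr ⟨j, hx⟩, Set.mem_iUnion.mpr ⟨j, hy⟩, Or.inl hP⟩
      _ = gdist (comp G P j) w x y := by rw [wt, if_pos hP, hx.1]

lemma gdist_BGraph_le_of_adj (h : G.Adj a c) (hac : P c ≠ P a) :
    gdist (BGraph G P) (wt G P w) a c ≤ w a c := by
  calc gdist (BGraph G P) (wt G P w) a c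
      ≤ wt G P w a c := gdist_le_of_adj
        ⟨h.ne, mem_bdryAll_of_adj h hac, mem_bdryAll_of_adj h.symm hac.symm, Or.inr h⟩
    _ = w a c := by rw [wt, if_neg hac.symm]

noncomputable def viaBdry (G : SimpleGraph V) (P : V → ι) (w : V → V → ℝ≥0∞) (a b : V) :
    ℝ≥0∞ :=
  ⨅ x ∈ bdry G P (P a), gdist (comp G P (P a)) w a x + gdist (BGraph G P) (wt G P w) x b

lemma viaBdry_self (hb : b ∈ bdryAll G P) : viaBdry G P w b b = 0 :=
  nonpos_iff_eq_zero.mp <| (iInf₂_le b (mem_bdryAll_iff.mp hb)).trans_eq (by simp)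

lemma viaBdry_le_add_of_comp_adj (h : (comp G P (P a)).Adj a c) :
    viaBdry G P w a b ≤ w a c + viaBdry G P w c b := by
  have hc : P c = P a := h.2.2
  simp only [viaBdry, hc, ENNReal.add_iInf]
  refine iInf₂_mono fun x _ => ?_
  rw [← add_assoc]
  exact add_le_add_left (gdist_le_add_of_adj h x) _

/-- `a` itself is a boundary vertex and `ac` is an edge of the boundary graph, so the route
leaves the component of `a` at once. -/
lemma viaBdry_le_add_of_adj_of_ne (h : G.Adj a c) (hac : P c ≠ P a) :
    viaBdry G P w a b ≤ w a c + viaBdry G P w c b := by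
  refine (iInf₂_le a (mem_bdry_of_adj h hac)).trans ?_
  simp only [gdist_self, zero_add, viaBdry, ENNReal.add_iInf]
  refine le_iInf₂ fun y hy => ?_
  calc gdist (BGraph G P) (wt G P w) a b
      ≤ gdist (BGraph G P) (wt G P w) a c + gdist (BGraph G P) (wt G P w) c y
        + gdist (BGraph G P) (wt G P w) y b :=
        (gdist_triangle a y b).trans (add_le_add_left (gdist_triangle a c y) _)
    _ ≤ w a c + gdist (comp G P (P c)) w c y + gdist (BGraph G P) (wt G P w) y b := by
        gcongr
        · exact gdist_BGraph_le_of_adj h hac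
        · exact gdist_BGraph_le_gdist_comp (mem_bdry_of_adj h.symm hac.symm) hy
    _ = _ := add_assoc _ _ _

lemma viaBdry_le_add_of_adj (h : G.Adj a c) :
    viaBdry G P w a b ≤ w a c + viaBdry G P w c b := by
  by_cases hac : P c = P a
  · exact viaBdry_le_add_of_comp_adj ⟨h, rfl, hac⟩
  · exact viaBdry_le_add_of_adj_of_ne h hac

lemma viaBdry_le_wlen (hb : b ∈ bdryAll G P) (p : G.Walk a b) :
    viaBdry G P w a b ≤ wlen w p := by
  induction p with
  | nil => simp [viaBdry_self hb]
  | cons h q ih =>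
    rw [wlen_cons]
    exact (viaBdry_le_add_of_adj h).trans (add_le_add_right (ih hb) _)

lemma viaBdry_le_gdist (hb : b ∈ bdryAll G P) : viaBdry G P w a b ≤ gdist G w a b :=
  le_iInf (viaBdry_le_wlen hb)

end BoundaryGraph

theorem stmt8_general {V : Type*} {ι : Type*}
    (G : SimpleGraph V) (w : V → V → ℝ≥0∞)
    (P : V → ι) (i : ι) (v1 b2 : V) (h1 : P v1 = i)
    (hb2 : b2 ∈ bdryAll G P) :
    gdist G w v1 b2 =
      ⨅ b1 ∈ bdry G P i,
        (gdist (comp G P i) w v1 b1 + gdist (BGraph G P) (wt G P w) b1 b2) := by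
  subst h1
  refine le_antisymm (le_iInf₂ fun b1 _ => ?_) (viaBdry_le_gdist hb2)
  calc gdist G w v1 b2
      ≤ gdist G w v1 b1 + gdist G w b1 b2 := gdist_triangle v1 b1 b2
    _ ≤ gdist (comp G P (P v1)) w v1 b1 + gdist (BGraph G P) (wt G P w) b1 b2 :=
        add_le_add (gdist_le_gdist_of_le (comp_le G P _) v1 b1) (gdist_le_gdist_BGraph b1 b2)

/-- Let `v1` be a vertex with `P v1 = i` and `b2` a boundary vertex with
`P b2 ≠ i`. Then `dist_G(v1,b2)` equals the infimum over `b1 ∈ B(C_i)` of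
`dist_{C_i}(v1,b1) + dist_BG(b1,b2)`. -/
theorem stmt8 {V : Type*} {ι : Type*} [Fintype V] [Fintype ι]
    (G : SimpleGraph V) (w : V → V → ℝ≥0∞)
    (hsymm : ∀ u v, w u v = w v u) (hfin : ∀ u v, G.Adj u v → w u v < ⊤)
    (P : V → ι) (i : ι) (v1 b2 : V) (h1 : P v1 = i)
    (hb2 : b2 ∈ bdryAll G P) (hne : P b2 ≠ i) :
    gdist G w v1 b2 =
      ⨅ b1 ∈ bdry G P i,
        (gdist (comp G P i) w v1 b1 + gdist (BGraph G P) (wt G P w) b1 b2) :=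
  stmt8_general G w P i v1 b2 h1 hb2

end SPQ
end
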